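/- arXiv:0901.4858 — 2 statements merged into one kernel-verified Lean document; each statement's English description precedes it below -/
import Mathlib

section
/- If G is a countable graph in which every vertex has infinite degree, then G admits an unfriendly partition; in fact there is a partition π : V(G) → {0,1} in which every vertex has infinitely many neighbours in the opposite class. -/
/-!
Since `V × Bool × ℕ` is countable, a greedy choice yields an injective map
`g : V × Bool × ℕ → V` with `g (x, b, m)` a neighbour of `x`: every neighbourhood is infinite
and only finitely many vertices have been used at each stage. Colouring `g (x, b, m)`
with `b` gives every vertex infinitely many neighbours of each colour, and in a countable graph
an infinite set of neighbours across the cut already makes a vertex happy.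
-/

open Cardinal

/-- A vertex `x` is happy in the two-colouring `π` of `G` if it has at least as many
neighbours in the opposite class as in its own class (as cardinals). -/
def Happy {V : Type*} (G : SimpleGraph V) (π : V → Bool) (x : V) : Prop :=
  #{y : V | G.Adj x y ∧ π y = π x} ≤ #{y : V | G.Adj x y ∧ π y ≠ π x}

/-- A two-colouring is unfriendly if every vertex is happy in it. -/
def Unfriendly {V : Type*} (G : SimpleGraph V) (π : V → Bool) : Prop :=
  ∀ x : V, Happy G π x

open Function

theorem exists_injective_nat_forall_mem {α : Type*} {S : ℕ → Set α}
    (hS : ∀ n, (S n).Infinite) : ∃ g : ℕ → α, Injective g ∧ ∀ n, g n ∈ S n := by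
  classical
  have avoid : ∀ n (t : Finset α), (S n \ t).Nonempty := fun n t =>
    ((hS n).sdiff t.finite_toSet).nonempty
  let next (n : ℕ) (t : Finset α) : α := (avoid n t).some
  let used (n : ℕ) : Finset α :=
    Nat.rec (motive := fun _ => Finset α) ∅ (fun k t => insert (next k t) t) n
  let g (n : ℕ) : α := next n (used n)
  have g_spec : ∀ n, g n ∈ S n \ (used n : Set α) := fun n => (avoid n _).some_mem
  have g_mem_used : ∀ {m n}, m < n → g m ∈ used n := by
    intro m n hmn
    induction n with
    | zero => omega
    | succ k ih =>
      rcases Nat.lt_succ_iff_lt_or_eq.mp hmn with hlt | rfl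
      · exact Finset.mem_insert_of_mem (ih hlt)
      · exact Finset.mem_insert_self _ _
  refine ⟨g, fun m n hgmn => ?_, fun n => (g_spec n).1⟩
  by_contra hmn
  rcases lt_or_gt_of_ne hmn with hlt | hlt
  · exact (g_spec n).2 (hgmn ▸ g_mem_used hlt)
  · exact (g_spec m).2 (hgmn ▸ g_mem_used hlt)

theorem exists_injective_forall_mem {ι α : Type*} [Countable ι] {S : ι → Set α}
    (hS : ∀ i, (S i).Infinite) : ∃ g : ι → α, Injective g ∧ ∀ i, g i ∈ S i := by
  cases isEmpty_or_nonempty ι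
  · exact ⟨isEmptyElim, fun i => isEmptyElim i, fun i => isEmptyElim i⟩
  obtain ⟨e, he⟩ := exists_surjective_nat ι
  obtain ⟨g, hg, hgS⟩ := exists_injective_nat_forall_mem fun n => hS (e n)
  refine ⟨g ∘ surjInv he, hg.comp (injective_surjInv he), fun i => ?_⟩
  simpa only [comp_apply, surjInv_eq he i] using hgS (surjInv he i)

theorem exists_colouring_forall_infinite_inter_fibre {ι α κ : Type*} [Countable ι] [Countable κ]
    [Nonempty κ] {S : ι → Set α} (hS : ∀ i, (S i).Infinite) :
    ∃ π : α → κ, ∀ i c, (S i ∩ π ⁻¹' {c}).Infinite := by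
  obtain ⟨g, hg, hgS⟩ := exists_injective_forall_mem (S := fun p : ι × κ × ℕ => S p.1) (hS ·.1)
  refine ⟨extend g (fun p => p.2.1) fun _ => Classical.arbitrary κ, fun i c => ?_⟩
  refine Set.infinite_of_injective_forall_mem (f := fun m => g (i, c, m)) ?_
    fun m => ⟨hgS (i, c, m), ?_⟩
  · exact fun m m' h => by simpa using hg h
  · simp only [Set.mem_preimage, hg.extend_apply, Set.mem_singleton_iff]

theorem happy_of_infinite {V : Type*} [Countable V] {G : SimpleGraph V} {π : V → Bool} {x : V}
    (h : {y : V | G.Adj x y ∧ π y ≠ π x}.Infinite) : Happy G π x :=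
  mk_le_aleph0.trans (aleph0_le_mk_iff.mpr h.to_subtype)

/-- Every countable graph in which every vertex has infinite degree admits an unfriendly
partition; in fact one in which every vertex has infinitely many neighbours in the opposite
class. -/
theorem countable_allInfiniteDegree_unfriendly {V : Type*} [Countable V]
    (G : SimpleGraph V) (hinf : ∀ v : V, (G.neighborSet v).Infinite) :
    ∃ π : V → Bool, Unfriendly G π ∧
      ∀ x : V, {y : V | G.Adj x y ∧ π y ≠ π x}.Infinite := by
  obtain ⟨π, hπ⟩ := exists_colouring_forall_infinite_inter_fibre (κ := Bool) hinf
  have across : ∀ x, {y : V | G.Adj x y ∧ π y ≠ π x}.Infinite := fun x =>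
    (hπ x !(π x)).mono fun _ hy => ⟨hy.1, fun h => by simpa [h] using hy.2⟩
  exact ⟨π, fun x => happy_of_infinite (across x), across⟩
end

section
/- A graph is rayless (contains no one-way infinite path) if and only if it belongs to the Schmidt closure of the class ℱ of finite graphs. -/
open Cardinal

/-- `G` contains a ray: a one-way infinite path. -/
def HasRay {V : Type*} (G : SimpleGraph V) : Prop :=
  ∃ r : ℕ → V, Function.Injective r ∧ ∀ n : ℕ, G.Adj (r n) (r (n + 1))

universe u

/-- A class of graphs: a predicate on simple graphs over arbitrary vertex types in universe `u`. -/
def GraphClass : Type (u + 1) := ∀ (V : Type u), SimpleGraph V → Prop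

/-- The component graph: the subgraph of `G` induced by a connected component `C` of `G - S`. -/
def CompGraph {V : Type u} (G : SimpleGraph V) (S : Set V)
    (C : (G.induce Sᶜ).ConnectedComponent) : SimpleGraph C.supp :=
  (G.induce Sᶜ).induce C.supp

/-- The Schmidt hierarchy: `SchmidtLevel 𝒰 0 = 𝒰`, and for `μ > 0` a graph `G` lies in
`SchmidtLevel 𝒰 μ` iff there is a finite vertex set `S` such that every component of `G - S`
lies in `SchmidtLevel 𝒰 lam` for some `lam < μ`. -/
noncomputable def SchmidtLevel (𝒰 : GraphClass.{u}) (μ : Ordinal.{u}) : GraphClass.{u} :=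
  fun V G =>
    if μ = 0 then 𝒰 V G
    else ∃ S : Set V, S.Finite ∧
      ∀ C : (G.induce Sᶜ).ConnectedComponent,
        ∃ lam : Ordinal.{u}, ∃ _ : lam < μ, SchmidtLevel 𝒰 lam C.supp (CompGraph G S C)
  termination_by μ
  decreasing_by exact ‹_›

/-- A graph belongs to the Schmidt closure of `𝒰` if it lies in some level of the hierarchy. -/
def InSchmidtClosure (𝒰 : GraphClass.{u}) {V : Type u} (G : SimpleGraph V) : Prop :=
  ∃ μ : Ordinal.{u}, SchmidtLevel 𝒰 μ V G

/-- The rank of a graph in the Schmidt closure: the least level containing it. -/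
noncomputable def SchmidtRank (𝒰 : GraphClass.{u}) {V : Type u} (G : SimpleGraph V) :
    Ordinal.{u} :=
  sInf {μ : Ordinal.{u} | SchmidtLevel 𝒰 μ V G}

/-!
If `G` lies in level `μ > 0` with separator `S`, a ray of `G` has a tail avoiding the finite
set `S`; this tail runs inside one component of `G - S`, which lies in a lower level, so
induction on `μ` shows that the closure of a class of rayless graphs is rayless.

Conversely, if `G` is not in the closure, then for every finite `S` some component of `G - S`
is not in the closure either, for otherwise `S` would witness membership at the successor of
the supremum of their levels. So from a connected set `A` spanning a graph outside the closure
and any `v ∈ A` we get a component `B` of `A - v` outside the closure, and `B` contains a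
neighbour of `v` because `A` is connected. Iterating yields nested sets `A₀ ⊇ A₁ ⊇ ⋯` and
vertices `vₙ ∈ Aₙ \ Aₙ₊₁` with `vₙ` adjacent to `vₙ₊₁`: a ray.
-/

open SimpleGraph

section

variable {V : Type u} {G : SimpleGraph V} {𝒰 : GraphClass.{u}}

lemma schmidtLevel_zero : SchmidtLevel 𝒰 0 V G ↔ 𝒰 V G := by
  rw [SchmidtLevel, if_pos rfl]

lemma schmidtLevel_of_ne_zero {μ : Ordinal.{u}} (hμ : μ ≠ 0) :
    SchmidtLevel 𝒰 μ V G ↔ ∃ S : Set V, S.Finite ∧ ∀ C : (G.induce Sᶜ).ConnectedComponent,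
      ∃ lam < μ, SchmidtLevel 𝒰 lam C.supp (CompGraph G S C) := by
  rw [SchmidtLevel, if_neg hμ]
  simp only [exists_prop]

lemma not_hasRay_of_finite [Finite V] (G : SimpleGraph V) : ¬ HasRay G :=
  fun ⟨r, hr, _⟩ => (Finite.of_injective r hr).false

lemma hasRay_induce_of_forall_mem {s : Set V} {r : ℕ → V} (hr : Function.Injective r)
    (hadj : ∀ n, G.Adj (r n) (r (n + 1))) (hs : ∀ n, r n ∈ s) : HasRay (G.induce s) :=
  ⟨fun n => ⟨r n, hs n⟩, fun _ _ h => hr (congrArg Subtype.val h), hadj⟩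

lemma HasRay.induce_compl {S : Set V} (hS : S.Finite) (h : HasRay G) :
    HasRay (G.induce Sᶜ) := by
  obtain ⟨r, hr, hadj⟩ := h
  obtain ⟨N, hN⟩ := (hS.preimage hr.injOn).bddAbove
  refine hasRay_induce_of_forall_mem (r := fun n => r (n + N + 1))
    (hr.comp fun _ _ h => by omega) (fun n => by simpa [add_right_comm] using hadj (n + N + 1))
    fun n hn => ?_
  have := hN hn
  omega

lemma HasRay.exists_connectedComponent (h : HasRay G) :
    ∃ C : G.ConnectedComponent, HasRay C.toSimpleGraph := by
  obtain ⟨r, hr, hadj⟩ := h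
  refine ⟨G.connectedComponentMk (r 0), hasRay_induce_of_forall_mem hr hadj fun n => ?_⟩
  induction n with
  | zero => rfl
  | succ n ih => exact ((G.connectedComponentMk (r 0)).mem_supp_congr_adj (hadj n)).1 ih

lemma not_hasRay_of_schmidtLevel (h𝒰 : ∀ (W : Type u) (H : SimpleGraph W), 𝒰 W H → ¬ HasRay H)
    {μ : Ordinal.{u}} (hG : SchmidtLevel 𝒰 μ V G) : ¬ HasRay G := by
  induction μ using WellFoundedLT.induction generalizing V with
  | ind μ ih =>
    intro hray
    rcases eq_or_ne μ 0 with rfl | hμ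
    · exact h𝒰 V G (schmidtLevel_zero.1 hG) hray
    obtain ⟨S, hS, hcomp⟩ := (schmidtLevel_of_ne_zero hμ).1 hG
    obtain ⟨C, hC⟩ := (hray.induce_compl hS).exists_connectedComponent
    obtain ⟨lam, hlam, hlev⟩ := hcomp C
    exact ih lam hlam hlev hC

lemma inSchmidtClosure_of_forall_compGraph {S : Set V} (hS : S.Finite)
    (h : ∀ C : (G.induce Sᶜ).ConnectedComponent, InSchmidtClosure 𝒰 (CompGraph G S C)) :
    InSchmidtClosure 𝒰 G := by
  choose f hf using h
  exact ⟨Order.succ (⨆ C, f C), (schmidtLevel_of_ne_zero (Order.succ_ne_bot _)).2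
    ⟨S, hS, fun C => ⟨f C, Order.lt_succ_of_le (Ordinal.le_iSup f C), hf C⟩⟩⟩

lemma exists_not_inSchmidtClosure_compGraph (hG : ¬ InSchmidtClosure 𝒰 G) {S : Set V}
    (hS : S.Finite) : ∃ C : (G.induce Sᶜ).ConnectedComponent,
      ¬ InSchmidtClosure 𝒰 (CompGraph G S C) := by
  by_contra! h
  exact hG (inSchmidtClosure_of_forall_compGraph hS h)

def GraphClass.IsIsoInvariant (𝒰 : GraphClass.{u}) : Prop :=
  ∀ ⦃V W : Type u⦄ ⦃G : SimpleGraph V⦄ ⦃H : SimpleGraph W⦄, G ≃g H → 𝒰 V G → 𝒰 W H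

lemma GraphClass.isIsoInvariant_finite :
    GraphClass.IsIsoInvariant.{u} fun (W : Type u) (_ : SimpleGraph W) => Finite W :=
  fun _ _ _ _ e (_ : Finite _) => Finite.of_equiv _ e.toEquiv

def SimpleGraph.Iso.connectedComponentToSimpleGraph {W : Type*} {H : SimpleGraph W}
    (φ : G ≃g H) (C : G.ConnectedComponent) :
    C.toSimpleGraph ≃g (φ.connectedComponentEquiv C).toSimpleGraph where
  toEquiv := ConnectedComponent.isoEquivSupp φ C
  map_rel_iff' := φ.map_rel_iff

lemma schmidtLevel_of_iso (h𝒰 : 𝒰.IsIsoInvariant) {μ : Ordinal.{u}} {W : Type u}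
    {H : SimpleGraph W} (e : G ≃g H) (hG : SchmidtLevel 𝒰 μ V G) : SchmidtLevel 𝒰 μ W H := by
  induction μ using WellFoundedLT.induction generalizing V W with
  | ind μ ih =>
    rcases eq_or_ne μ 0 with rfl | hμ
    · exact schmidtLevel_zero.2 (h𝒰 e (schmidtLevel_zero.1 hG))
    obtain ⟨S, hS, hcomp⟩ := (schmidtLevel_of_ne_zero hμ).1 hG
    let eS : G.induce Sᶜ ≃g H.induce (e '' S)ᶜ :=
      e.induce (e.injective.bijOn_image.compl e.bijective)
    refine (schmidtLevel_of_ne_zero hμ).2 ⟨e '' S, hS.image e, fun C' => ?_⟩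
    obtain ⟨C, rfl⟩ := eS.connectedComponentEquiv.surjective C'
    obtain ⟨lam, hlam, hlev⟩ := hcomp C
    exact ⟨lam, hlam, ih lam hlam (eS.connectedComponentToSimpleGraph C) hlev⟩

lemma InSchmidtClosure.of_iso (h𝒰 : 𝒰.IsIsoInvariant) {W : Type u} {H : SimpleGraph W}
    (e : G ≃g H) (hG : InSchmidtClosure 𝒰 G) : InSchmidtClosure 𝒰 H :=
  hG.imp fun _ => schmidtLevel_of_iso h𝒰 e

def compGraphEmbedding (G : SimpleGraph V) (S : Set V) (C : (G.induce Sᶜ).ConnectedComponent) :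
    CompGraph G S C ↪g G :=
  (Embedding.induce Sᶜ).comp (Embedding.induce C.supp)

lemma not_inSchmidtClosure_induce_range (h𝒰 : 𝒰.IsIsoInvariant) {W : Type u}
    {H : SimpleGraph W} (f : H ↪g G) (hH : ¬ InSchmidtClosure 𝒰 H) :
    ¬ InSchmidtClosure 𝒰 (G.induce (Set.range f)) :=
  fun h => hH (h.of_iso h𝒰 f.isoInduceRange.symm)

lemma exists_connected_not_inSchmidtClosure_induce (h𝒰 : 𝒰.IsIsoInvariant)
    (hG : ¬ InSchmidtClosure 𝒰 G) :
    ∃ A : Set V, ¬ InSchmidtClosure 𝒰 (G.induce A) ∧ (G.induce A).Connected := by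
  obtain ⟨C, hC⟩ := exists_not_inSchmidtClosure_compGraph hG Set.finite_empty
  let f := compGraphEmbedding G ∅ C
  exact ⟨Set.range f, not_inSchmidtClosure_induce_range h𝒰 f hC,
    f.isoInduceRange.connected_iff.1 C.connected_toSimpleGraph⟩

lemma exists_adj_connected_not_inSchmidtClosure_induce_subset (h𝒰 : 𝒰.IsIsoInvariant)
    {A : Set V} (hA : ¬ InSchmidtClosure 𝒰 (G.induce A)) (hconn : (G.induce A).Connected)
    {v : V} (hv : v ∈ A) :
    ∃ B ⊆ A, v ∉ B ∧ (¬ InSchmidtClosure 𝒰 (G.induce B) ∧ (G.induce B).Connected) ∧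
      ∃ u ∈ B, G.Adj v u := by
  let S : Set A := {⟨v, hv⟩}
  obtain ⟨C, hC⟩ := exists_not_inSchmidtClosure_compGraph hA (Set.finite_singleton _)
  let f := (Embedding.induce A).comp (compGraphEmbedding (G.induce A) S C)
  refine ⟨Set.range f, ?_, ?_, ⟨not_inSchmidtClosure_induce_range h𝒰 f hC,
    f.isoInduceRange.connected_iff.1 C.connected_toSimpleGraph⟩, ?_⟩
  · rintro _ ⟨x, rfl⟩
    exact x.1.1.2
  · rintro ⟨x, hx⟩
    exact x.1.2 (Subtype.ext hx)
  · obtain ⟨⟨c, k⟩, ⟨hcS, hcC⟩, rfl, hck⟩ :=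
      ComponentCompl.exists_adj_boundary_pair hconn.preconnected (Set.singleton_nonempty _) C
    exact ⟨c, ⟨⟨⟨c, hcS⟩, hcC⟩, rfl⟩, hck.symm⟩

lemma hasRay_of_antitone {A : ℕ → Set V} {v : ℕ → V} (hA : Antitone A)
    (hmem : ∀ n, v n ∈ A n) (hnot : ∀ n, v n ∉ A (n + 1))
    (hadj : ∀ n, G.Adj (v n) (v (n + 1))) : HasRay G :=
  ⟨v, Function.Injective.of_lt_imp_ne fun m n hmn h => hnot m (h ▸ hA hmn (hmem n)), hadj⟩

lemma hasRay_of_forall_exists_adj (P : Set V → Prop) (h₀ : ∃ A, P A ∧ A.Nonempty)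
    (hstep : ∀ A, P A → ∀ v ∈ A, ∃ B ⊆ A, v ∉ B ∧ P B ∧ ∃ u ∈ B, G.Adj v u) : HasRay G := by
  let State := {p : Set V × V // P p.1 ∧ p.2 ∈ p.1}
  have hnext : ∀ s : State, ∃ t : State, t.1.1 ⊆ s.1.1 ∧ s.1.2 ∉ t.1.1 ∧ G.Adj s.1.2 t.1.2 := by
    rintro ⟨⟨A, v⟩, hA, hv⟩
    obtain ⟨B, hBA, hvB, hB, u, hu, hvu⟩ := hstep A hA v hv
    exact ⟨⟨(B, u), hB, hu⟩, hBA, hvB, hvu⟩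
  choose next hsub hnot hadj using hnext
  obtain ⟨A₀, hA₀, v₀, hv₀⟩ := h₀
  let s : ℕ → State := fun n => next^[n] ⟨(A₀, v₀), hA₀, hv₀⟩
  have hs : ∀ n, s (n + 1) = next (s n) := fun n => Function.iterate_succ_apply' next n _
  refine hasRay_of_antitone (A := fun n => (s n).1.1) (v := fun n => (s n).1.2)
    (antitone_nat_of_succ_le fun n => ?_) (fun n => (s n).2.2) (fun n => ?_) (fun n => ?_)
  · rw [hs]; exact hsub _
  · rw [hs]; exact hnot _
  · rw [hs]; exact hadj _

lemma hasRay_of_not_inSchmidtClosure (h𝒰 : 𝒰.IsIsoInvariant) (hG : ¬ InSchmidtClosure 𝒰 G) :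
    HasRay G := by
  refine hasRay_of_forall_exists_adj (fun A => ¬ InSchmidtClosure 𝒰 (G.induce A) ∧
    (G.induce A).Connected) ?_ fun A hA v hv =>
      exists_adj_connected_not_inSchmidtClosure_induce_subset h𝒰 hA.1 hA.2 hv
  obtain ⟨A, hA, hconn⟩ := exists_connected_not_inSchmidtClosure_induce h𝒰 hG
  exact ⟨A, ⟨hA, hconn⟩, Set.nonempty_coe_sort.1 hconn.nonempty⟩

end

/-- Schmidt's theorem: a graph is rayless iff it lies in the Schmidt closure of the class of
finite graphs. -/
theorem rayless_iff_inSchmidtClosure_finite {V : Type u} (G : SimpleGraph V) :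
    ¬ HasRay G ↔ InSchmidtClosure (fun (W : Type u) (_ : SimpleGraph W) => Finite W) G := by
  refine ⟨not_imp_comm.1 (hasRay_of_not_inSchmidtClosure GraphClass.isIsoInvariant_finite),
    fun ⟨_, hμ⟩ => ?_⟩
  exact not_hasRay_of_schmidtLevel (fun _ H (_ : Finite _) => not_hasRay_of_finite H) hμ
end
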